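/- Let S be the set of T-even matrix polynomials in P_m(ℂ^{n×n}) and let P ∈ S be regular. Let λ ∈ ℂ and x ∈ ℂⁿ with x^H x = 1, and set r := −P(λ)x, Λ_m := (1, λ, …, λ^m)ᵀ, and P_x := I − x x^H. Then η_F^S(λ, x, P) = sqrt( |xᵀr|²/‖Π_e(Λ_m)‖₂² + 2(‖r‖₂² − |xᵀr|²)/‖Λ_m‖₂² ). In particular, if m is odd and |λ| = 1, then η_F^S(λ, x, P) = √2 · η(λ, x, P). Moreover, defining E_j := (conj(λ^j)/‖Π_e(Λ_m)‖₂²)·(xᵀr)·x̄ x^H + (conj(λ^j)/‖Λ_m‖₂²)·(x̄ rᵀ P_x + P_xᵀ r x^H) for even j, and E_j := (conj(λ^j)/‖Λ_m‖₂²)·(P_xᵀ r x^H − x̄ rᵀ P_x) for odd j, the polynomial ΔP(z) := Σ_{j=0}^m z^j E_j is the unique T-even polynomial in P_m(ℂ^{n×n}) satisfying P(λ)x + ΔP(λ)x = 0 and |||ΔP|||_F = η_F^S(λ, x, P). -/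

import Mathlib

open scoped ComplexConjugate
open Matrix

noncomputable section

variable {ι : Type*} [Fintype ι] [DecidableEq ι]

/-- Evaluation of the matrix polynomial with coefficient list `A` at the point `z`. -/
def polyEval {m : ℕ} (A : Fin (m+1) → Matrix ι ι ℂ) (z : ℂ) : Matrix ι ι ℂ :=
  ∑ j : Fin (m+1), z ^ (j : ℕ) • A j

/-- Squared Euclidean norm of a complex vector. -/
def vecNormSq (x : ι → ℂ) : ℝ := ∑ i, ‖x i‖ ^ 2

/-- Euclidean norm of a complex vector. -/
def vecNorm (x : ι → ℂ) : ℝ := Real.sqrt (vecNormSq x)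

/-- `‖(1, z, …, z^m)‖₂²`. -/
def lamNormSq (m : ℕ) (z : ℂ) : ℝ := ∑ j : Fin (m+1), ‖z ^ (j : ℕ)‖ ^ 2

/-- Squared Frobenius norm of a matrix. -/
def frobNormSq (M : Matrix ι ι ℂ) : ℝ := ∑ i, ∑ k, ‖M i k‖ ^ 2

/-- Spectral (operator 2-) norm of a matrix. -/
def specNorm (M : Matrix ι ι ℂ) : ℝ := ‖Matrix.toEuclideanCLM (𝕜 := ℂ) M‖

/-- Frobenius norm of a matrix polynomial: `(Σ_j ‖A_j‖_F²)^{1/2}`. -/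
def polyNormF {m : ℕ} (A : Fin (m+1) → Matrix ι ι ℂ) : ℝ :=
  Real.sqrt (∑ j, frobNormSq (A j))

/-- Spectral norm of a matrix polynomial: `(Σ_j ‖A_j‖₂²)^{1/2}`. -/
def polyNorm2 {m : ℕ} (A : Fin (m+1) → Matrix ι ι ℂ) : ℝ :=
  Real.sqrt (∑ j, specNorm (A j) ^ 2)

/-- Structured backward error of `(lam, x)` as an approximate eigenpair of the matrix
polynomial `A`, with respect to the polynomial norm `N` and the structure class `S`. -/
def eta {m : ℕ} (N : (Fin (m+1) → Matrix ι ι ℂ) → ℝ)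
    (S : Set (Fin (m+1) → Matrix ι ι ℂ)) (lam : ℂ) (x : ι → ℂ)
    (A : Fin (m+1) → Matrix ι ι ℂ) : ℝ :=
  sInf {t | ∃ ΔA ∈ S, (polyEval A lam + polyEval ΔA lam) *ᵥ x = 0 ∧ t = N ΔA}

/-- A matrix polynomial is regular if `det P(z) ≠ 0` for some `z`. -/
def Regular {m : ℕ} (A : Fin (m+1) → Matrix ι ι ℂ) : Prop :=
  ∃ z : ℂ, (polyEval A z).det ≠ 0


/-- The class of T-even matrix polynomials: symmetric coefficients at even indices,
skew-symmetric coefficients at odd indices. -/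
def TevenPoly {ι : Type*} [Fintype ι] [DecidableEq ι] {m : ℕ} :
    Set (Fin (m+1) → Matrix ι ι ℂ) :=
  {B | ∀ j : Fin (m+1), (Even (j : ℕ) → (B j)ᵀ = B j) ∧ (¬ Even (j : ℕ) → (B j)ᵀ = -(B j))}

/-- `‖Π_e(Λ_m)‖₂²`, the squared norm of the even-index part of `(1, z, …, z^m)`. -/
def lamEvenNormSq (m : ℕ) (z : ℂ) : ℝ :=
  ∑ j : Fin (m+1), if Even (j : ℕ) then ‖z ^ (j : ℕ)‖ ^ 2 else 0

end

/-! Admissible T-even perturbations form an affine space `E + K` with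
`K = {C T-even : C(λ)x = 0}`. For T-even `C`, symmetry of the even and skew-symmetry of the odd
coefficients turn `⟨E_j, C_j⟩_F` into `λ^j (u ⬝ C_j x)` for one vector `u` (with `xᵀ C_j x = 0`
at odd `j`), so `⟨E, C⟩_F = u ⬝ C(λ)x`, which vanishes on `K`. Pythagoras then makes `E` the unique
perturbation of least norm, and `|||E|||_F² = ⟨E, E⟩_F = u ⬝ E(λ)x = u ⬝ r`. The unstructured
minimiser `E_j = conj(λ^j) r xᴴ / ‖Λ_m‖²` is handled the same way. For odd `m` and `|λ| = 1`,
exactly half of the `m + 1` entries of `Λ_m` have even index, so `‖Λ_m‖² = 2 ‖Π_e(Λ_m)‖²`. -/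

section MatrixFacts

variable {R : Type*} {ι : Type*} [Fintype ι]

theorem dotProduct_mulVec_comm_of_transpose_eq [CommSemiring R] {C : Matrix ι ι R}
    (hC : Cᵀ = C) (v w : ι → R) : v ⬝ᵥ C *ᵥ w = w ⬝ᵥ C *ᵥ v := by
  rw [dotProduct_mulVec, ← mulVec_transpose, hC, dotProduct_comm]

theorem dotProduct_mulVec_comm_of_transpose_eq_neg [CommRing R] {C : Matrix ι ι R}
    (hC : Cᵀ = -C) (v w : ι → R) : v ⬝ᵥ C *ᵥ w = -(w ⬝ᵥ C *ᵥ v) := by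
  rw [dotProduct_mulVec, ← mulVec_transpose, hC, neg_mulVec, neg_dotProduct, dotProduct_comm]

theorem dotProduct_mulVec_self_eq_zero_of_transpose_eq_neg [CommRing R] [IsAddTorsionFree R]
    {C : Matrix ι ι R} (hC : Cᵀ = -C) (v : ι → R) : v ⬝ᵥ C *ᵥ v = 0 :=
  self_eq_neg.mp (dotProduct_mulVec_comm_of_transpose_eq_neg hC v v)

variable [CommRing R] [DecidableEq ι]

theorem vecMulVec_mul_one_sub_vecMulVec (a r x y : ι → R) :
    vecMulVec a r * (1 - vecMulVec x y) = vecMulVec a (r - (r ⬝ᵥ x) • y) := by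
  rw [Matrix.mul_sub, Matrix.mul_one, vecMulVec_mul_vecMulVec, vecMulVec_sub]

theorem one_sub_vecMulVec_transpose_mul (x y r b : ι → R) :
    (1 - vecMulVec x y)ᵀ * vecMulVec r b = vecMulVec (r - (x ⬝ᵥ r) • y) b := by
  rw [transpose_sub, transpose_one, transpose_vecMulVec, Matrix.sub_mul, Matrix.one_mul,
    vecMulVec_mul_vecMulVec, sub_vecMulVec, smul_vecMulVec, vecMulVec_smul]

end MatrixFacts

section FrobeniusInner

variable {ι : Type*} [Fintype ι]

def frobInner (M N : Matrix ι ι ℂ) : ℂ := (Mᴴ * N).trace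

theorem frobInner_add_left (M N C : Matrix ι ι ℂ) :
    frobInner (M + N) C = frobInner M C + frobInner N C := by
  simp only [frobInner, conjTranspose_add, Matrix.add_mul, trace_add]

theorem frobInner_sub_left (M N C : Matrix ι ι ℂ) :
    frobInner (M - N) C = frobInner M C - frobInner N C := by
  simp only [frobInner, conjTranspose_sub, Matrix.sub_mul, trace_sub]

theorem frobInner_smul_left (c : ℂ) (M C : Matrix ι ι ℂ) :
    frobInner (c • M) C = conj c * frobInner M C := by
  simp only [frobInner, conjTranspose_smul, Matrix.smul_mul, trace_smul, smul_eq_mul,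
    Complex.star_def]

theorem frobInner_vecMulVec_left (a b : ι → ℂ) (C : Matrix ι ι ℂ) :
    frobInner (vecMulVec a b) C = star a ⬝ᵥ C *ᵥ star b := by
  rw [frobInner, conjTranspose_vecMulVec, vecMulVec_mul, trace_vecMulVec, dotProduct_comm,
    dotProduct_mulVec]

theorem star_dotProduct_self_eq_vecNormSq (v : ι → ℂ) : star v ⬝ᵥ v = (vecNormSq v : ℂ) := by
  simp only [dotProduct, vecNormSq, Pi.star_apply, Complex.star_def, Complex.conj_mul']
  push_cast
  rfl

end FrobeniusInner

section PolyToL2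

variable {ι : Type*} {m : ℕ}

def polyToL2 (B : Fin (m+1) → Matrix ι ι ℂ) : EuclideanSpace ℂ (Fin (m+1) × ι × ι) :=
  WithLp.toLp 2 fun p => B p.1 p.2.1 p.2.2

theorem polyToL2_injective : Function.Injective (polyToL2 (ι := ι) (m := m)) :=
  fun _ _ h => funext fun j => funext fun i => funext fun k =>
    congrFun (congrArg WithLp.ofLp h) (j, i, k)

variable [Fintype ι]

theorem polyNormF_eq_norm_polyToL2 (B : Fin (m+1) → Matrix ι ι ℂ) :
    polyNormF B = ‖polyToL2 B‖ := by
  simp [polyNormF, frobNormSq, EuclideanSpace.norm_eq, polyToL2, Fintype.sum_prod_type]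

theorem inner_polyToL2 (B C : Fin (m+1) → Matrix ι ι ℂ) :
    inner ℂ (polyToL2 B) (polyToL2 C) = ∑ j, frobInner (B j) (C j) := by
  simp only [polyToL2, PiLp.inner_apply, Fintype.sum_prod_type, frobInner, trace, mul_apply,
    diag, conjTranspose_apply, RCLike.inner_apply, Complex.star_def]
  refine Finset.sum_congr rfl fun j _ => ?_
  rw [Finset.sum_comm]
  simp only [mul_comm]

theorem polyNormF_nonneg (B : Fin (m+1) → Matrix ι ι ℂ) : 0 ≤ polyNormF B :=
  Real.sqrt_nonneg _

theorem polyNormF_sq (B : Fin (m+1) → Matrix ι ι ℂ) :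
    polyNormF B ^ 2 = (∑ j, frobInner (B j) (B j)).re := by
  rw [polyNormF_eq_norm_polyToL2, ← inner_polyToL2, norm_sq_eq_re_inner (𝕜 := ℂ)]
  rfl

theorem polyNormF_add_sq_of_sum_frobInner_eq_zero {E C : Fin (m+1) → Matrix ι ι ℂ}
    (h : ∑ j, frobInner (E j) (C j) = 0) :
    polyNormF (E + C) ^ 2 = polyNormF E ^ 2 + polyNormF C ^ 2 := by
  simp only [polyNormF_eq_norm_polyToL2, sq]
  exact norm_add_sq_eq_norm_sq_add_norm_sq_of_inner_eq_zero (𝕜 := ℂ) (polyToL2 E) (polyToL2 C)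
    (by rw [inner_polyToL2, h])

theorem eq_zero_of_polyNormF_eq_zero {C : Fin (m+1) → Matrix ι ι ℂ} (h : polyNormF C = 0) :
    C = 0 :=
  polyToL2_injective <| by rwa [polyNormF_eq_norm_polyToL2, norm_eq_zero] at h

end PolyToL2

section PolyEval

variable {ι : Type*} {m : ℕ}

theorem polyEval_sub (B C : Fin (m+1) → Matrix ι ι ℂ) (z : ℂ) :
    polyEval (B - C) z = polyEval B z - polyEval C z := by
  simp only [polyEval, Pi.sub_apply, smul_sub, Finset.sum_sub_distrib]

variable [Fintype ι]

theorem polyEval_mulVec (B : Fin (m+1) → Matrix ι ι ℂ) (z : ℂ) (x : ι → ℂ) :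
    polyEval B z *ᵥ x = ∑ j : Fin (m+1), z ^ (j : ℕ) • (B j *ᵥ x) := by
  simp only [polyEval, sum_mulVec, smul_mulVec]

theorem polyEval_conj_smul_mulVec (G : Fin (m+1) → Matrix ι ι ℂ) (lam : ℂ) (x : ι → ℂ) :
    polyEval (fun j => conj (lam ^ (j : ℕ)) • G j) lam *ᵥ x
      = ∑ j : Fin (m+1), ((‖lam ^ (j : ℕ)‖ ^ 2 : ℝ) : ℂ) • (G j *ᵥ x) := by
  rw [polyEval_mulVec]
  refine Finset.sum_congr rfl fun j _ => ?_
  rw [smul_mulVec, smul_smul, Complex.mul_conj']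
  push_cast
  rfl

theorem sum_frobInner_conj_smul {G C : Fin (m+1) → Matrix ι ι ℂ} {lam : ℂ} {x u : ι → ℂ}
    (h : ∀ j, frobInner (G j) (C j) = u ⬝ᵥ C j *ᵥ x) :
    ∑ j : Fin (m+1), frobInner (conj (lam ^ (j : ℕ)) • G j) (C j)
      = u ⬝ᵥ polyEval C lam *ᵥ x := by
  rw [polyEval_mulVec, dotProduct_sum]
  refine Finset.sum_congr rfl fun j _ => ?_
  rw [frobInner_smul_left, Complex.conj_conj, h, dotProduct_smul, smul_eq_mul]

theorem eta_eq_polyNormF_of_sum_frobInner_eq {S : Set (Fin (m+1) → Matrix ι ι ℂ)} {lam : ℂ}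
    {x : ι → ℂ} {A E : Fin (m+1) → Matrix ι ι ℂ} (u : ι → ℂ) (hsub : ∀ B ∈ S, B - E ∈ S)
    (hE : E ∈ S) (hres : (polyEval A lam + polyEval E lam) *ᵥ x = 0)
    (hu : ∀ C ∈ S, ∑ j, frobInner (E j) (C j) = u ⬝ᵥ polyEval C lam *ᵥ x) :
    eta polyNormF S lam x A = polyNormF E ∧
      ∀ B ∈ S, (polyEval A lam + polyEval B lam) *ᵥ x = 0 →
        polyNormF B = polyNormF E → B = E := by
  have hpyth : ∀ B ∈ S, (polyEval A lam + polyEval B lam) *ᵥ x = 0 →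
      polyNormF B ^ 2 = polyNormF E ^ 2 + polyNormF (B - E) ^ 2 := by
    intro B hB hBres
    have hBE : polyEval (B - E) lam *ᵥ x = 0 := by
      rw [polyEval_sub, ← add_sub_add_left_eq_sub _ _ (polyEval A lam), sub_mulVec, hBres, hres,
        sub_zero]
    have := polyNormF_add_sq_of_sum_frobInner_eq_zero
      (by rw [hu _ (hsub B hB), hBE, dotProduct_zero])
    rwa [add_sub_cancel] at this
  refine ⟨IsLeast.csInf_eq ⟨⟨E, hE, hres, rfl⟩, ?_⟩, fun B hB hBres hBE => ?_⟩
  · rintro _ ⟨B, hB, hBres, rfl⟩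
    have := hpyth B hB hBres
    nlinarith [polyNormF_nonneg B, polyNormF_nonneg E, sq_nonneg (polyNormF (B - E))]
  · have := hpyth B hB hBres
    rw [hBE, left_eq_add, sq_eq_zero_iff] at this
    exact sub_eq_zero.mp (eq_zero_of_polyNormF_eq_zero this)

end PolyEval

section LamNorms

variable {m : ℕ} {lam : ℂ}

theorem lamNormSq_pos (m : ℕ) (lam : ℂ) : 0 < lamNormSq m lam := by
  rw [lamNormSq, Fin.sum_univ_succ]
  simp only [Fin.val_zero, pow_zero, norm_one, one_pow]
  positivity

theorem lamEvenNormSq_pos (m : ℕ) (lam : ℂ) : 0 < lamEvenNormSq m lam := by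
  rw [lamEvenNormSq, Fin.sum_univ_succ]
  simp only [Fin.val_zero, Even.zero, if_true, pow_zero, norm_one, one_pow]
  positivity

theorem sum_normSq_pow_mul (c : ℂ) :
    ∑ j : Fin (m+1), ((‖lam ^ (j : ℕ)‖ ^ 2 : ℝ) : ℂ) * c = lamNormSq m lam * c := by
  rw [lamNormSq, Complex.ofReal_sum, Finset.sum_mul]

theorem sum_even_normSq_pow_mul (c : ℂ) :
    ∑ j : Fin (m+1), (if Even (j : ℕ) then ((‖lam ^ (j : ℕ)‖ ^ 2 : ℝ) : ℂ) * c else 0)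
      = lamEvenNormSq m lam * c := by
  rw [lamEvenNormSq, Complex.ofReal_sum, Finset.sum_mul]
  exact Finset.sum_congr rfl fun j _ => by split_ifs <;> simp

theorem lamNormSq_eq_two_mul_lamEvenNormSq (hm : Odd m) (hlam : ‖lam‖ = 1) :
    lamNormSq m lam = 2 * lamEvenNormSq m lam := by
  have hind : ∀ j : ℕ, (if Even j then (1 : ℝ) else 0) = (1 + (-1) ^ j) / 2 := fun j => by
    rcases Nat.even_or_odd j with hj | hj
    · rw [if_pos hj, hj.neg_one_pow]; norm_num
    · rw [if_neg (Nat.not_even_iff_odd.mpr hj), hj.neg_one_pow]; norm_num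
  simp only [lamNormSq, lamEvenNormSq, norm_pow, hlam, one_pow]
  rw [Fin.sum_univ_eq_sum_range (fun j => if Even j then (1 : ℝ) else 0),
    Finset.sum_congr rfl fun j _ => hind j, ← Finset.sum_div, Finset.sum_add_distrib,
    neg_one_geom_sum, if_pos hm.add_one]
  simp only [Finset.sum_const, Finset.card_univ, Fintype.card_fin, nsmul_eq_mul, Nat.cast_add,
    Nat.cast_one, mul_one, Finset.card_range, add_zero]
  ring

end LamNorms

section TevenBlock

variable {ι : Type*}

def tevenBlock (x s : ι → ℂ) (a b : ℂ) (j : ℕ) : Matrix ι ι ℂ :=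
  if Even j then
    a • vecMulVec (star x) (star x) + b • (vecMulVec (star x) s + vecMulVec s (star x))
  else b • (vecMulVec s (star x) - vecMulVec (star x) s)

variable {x s : ι → ℂ} {a b : ℂ} {j : ℕ}

theorem tevenBlock_transpose_of_even (hj : Even j) :
    (tevenBlock x s a b j)ᵀ = tevenBlock x s a b j := by
  simp only [tevenBlock, if_pos hj, transpose_add, transpose_smul, transpose_vecMulVec,
    add_comm (vecMulVec s (star x))]

theorem tevenBlock_transpose_of_not_even (hj : ¬Even j) :
    (tevenBlock x s a b j)ᵀ = -tevenBlock x s a b j := by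
  simp only [tevenBlock, if_neg hj, transpose_sub, transpose_smul, transpose_vecMulVec,
    ← smul_neg, neg_sub]

variable [Fintype ι]

theorem tevenBlock_mulVec (hx : star x ⬝ᵥ x = 1) (hs : s ⬝ᵥ x = 0) :
    tevenBlock x s a b j *ᵥ x = (if Even j then a else 0) • star x + b • s := by
  unfold tevenBlock
  split_ifs <;> simp [add_mulVec, sub_mulVec, smul_mulVec, vecMulVec_mulVec, hx, hs]

theorem frobInner_tevenBlock {C : Matrix ι ι ℂ} (hsymm : Even j → Cᵀ = C)
    (hskew : ¬Even j → Cᵀ = -C) :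
    frobInner (tevenBlock x s a b j) C = (conj a • x + (2 * conj b) • star s) ⬝ᵥ C *ᵥ x := by
  unfold tevenBlock
  split_ifs with hj
  · simp only [frobInner_add_left, frobInner_smul_left, frobInner_vecMulVec_left, star_star,
      dotProduct_mulVec_comm_of_transpose_eq (hsymm hj) x (star s), add_dotProduct,
      smul_dotProduct, smul_eq_mul]
    ring
  · simp only [frobInner_smul_left, frobInner_sub_left, frobInner_vecMulVec_left, star_star,
      dotProduct_mulVec_comm_of_transpose_eq_neg (hskew hj) x (star s), add_dotProduct,
      smul_dotProduct, smul_eq_mul, dotProduct_mulVec_self_eq_zero_of_transpose_eq_neg (hskew hj)]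
    ring

end TevenBlock

section Minimizers

variable {ι : Type*} [Fintype ι] {m : ℕ} {lam : ℂ} {x r : ι → ℂ}

/-- The paper's `ΔP`, written with `s = P_xᵀ r = r - (xᵀ r) x̄`. -/
noncomputable def tevenMinPert (m : ℕ) (lam : ℂ) (x r : ι → ℂ) : Fin (m+1) → Matrix ι ι ℂ :=
  fun j => conj (lam ^ (j : ℕ)) • tevenBlock x (r - (x ⬝ᵥ r) • star x)
    ((x ⬝ᵥ r) / lamEvenNormSq m lam) (1 / lamNormSq m lam) j

theorem tevenMinPert_mem [DecidableEq ι] : tevenMinPert m lam x r ∈ TevenPoly := fun j =>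
  ⟨fun hj => by simp only [tevenMinPert, transpose_smul, tevenBlock_transpose_of_even hj],
    fun hj => by
      simp only [tevenMinPert, transpose_smul, tevenBlock_transpose_of_not_even hj, smul_neg]⟩

theorem polyEval_tevenMinPert_mulVec (hx : star x ⬝ᵥ x = 1) :
    polyEval (tevenMinPert m lam x r) lam *ᵥ x = r := by
  have hs : (r - (x ⬝ᵥ r) • star x) ⬝ᵥ x = 0 := by
    rw [sub_dotProduct, smul_dotProduct, hx, dotProduct_comm, smul_eq_mul, mul_one, sub_self]
  have hNe : (lamEvenNormSq m lam : ℂ) ≠ 0 :=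
    Complex.ofReal_ne_zero.mpr (lamEvenNormSq_pos m lam).ne'
  have hN : (lamNormSq m lam : ℂ) ≠ 0 := Complex.ofReal_ne_zero.mpr (lamNormSq_pos m lam).ne'
  unfold tevenMinPert
  rw [polyEval_conj_smul_mulVec]
  simp only [tevenBlock_mulVec hx hs, smul_add, smul_smul, Finset.sum_add_distrib,
    ← Finset.sum_smul, mul_ite, mul_zero]
  rw [sum_even_normSq_pow_mul, sum_normSq_pow_mul, mul_div_cancel₀ _ hNe,
    mul_one_div_cancel hN, one_smul, add_sub_cancel]

theorem sum_frobInner_tevenMinPert [DecidableEq ι] {C : Fin (m+1) → Matrix ι ι ℂ}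
    (hC : C ∈ TevenPoly) :
    ∑ j, frobInner (tevenMinPert m lam x r j) (C j)
      = ((conj (x ⬝ᵥ r) / lamEvenNormSq m lam) • x
          + (2 / lamNormSq m lam : ℂ) • star (r - (x ⬝ᵥ r) • star x)) ⬝ᵥ polyEval C lam *ᵥ x :=
  sum_frobInner_conj_smul fun j => by
    rw [frobInner_tevenBlock (hC j).1 (hC j).2, map_div₀, map_div₀, map_one, Complex.conj_ofReal,
      Complex.conj_ofReal, mul_one_div]

theorem add_polyEval_tevenMinPert_mulVec {A : Fin (m+1) → Matrix ι ι ℂ}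
    (hx : star x ⬝ᵥ x = 1) (hr : r = -(polyEval A lam *ᵥ x)) :
    (polyEval A lam + polyEval (tevenMinPert m lam x r) lam) *ᵥ x = 0 := by
  rw [add_mulVec, polyEval_tevenMinPert_mulVec hx, hr, add_neg_cancel]

theorem polyNormF_tevenMinPert (hx : star x ⬝ᵥ x = 1) :
    polyNormF (tevenMinPert m lam x r)
      = Real.sqrt (‖x ⬝ᵥ r‖ ^ 2 / lamEvenNormSq m lam
          + 2 * (vecNormSq r - ‖x ⬝ᵥ r‖ ^ 2) / lamNormSq m lam) := by
  classical
  rw [← Real.sqrt_sq (polyNormF_nonneg _), polyNormF_sq,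
    sum_frobInner_tevenMinPert tevenMinPert_mem, polyEval_tevenMinPert_mulVec hx]
  congr 1
  have hα := Complex.conj_mul' (x ⬝ᵥ r)
  rw [← Complex.ofReal_re (_ + _)]
  congr 1
  simp only [add_dotProduct, smul_dotProduct, star_sub, star_smul, star_star, sub_dotProduct,
    star_dotProduct_self_eq_vecNormSq, smul_eq_mul, Complex.star_def]
  push_cast
  linear_combination (1 / (lamEvenNormSq m lam : ℂ) - 2 / lamNormSq m lam) * hα

theorem sub_mem_TevenPoly [DecidableEq ι] {B C : Fin (m+1) → Matrix ι ι ℂ}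
    (hB : B ∈ TevenPoly) (hC : C ∈ TevenPoly) : B - C ∈ TevenPoly := fun j =>
  ⟨fun hj => by rw [Pi.sub_apply, transpose_sub, (hB j).1 hj, (hC j).1 hj],
    fun hj => by rw [Pi.sub_apply, transpose_sub, (hB j).2 hj, (hC j).2 hj, neg_sub_neg, neg_sub]⟩

theorem eta_TevenPoly_eq [DecidableEq ι] {A : Fin (m+1) → Matrix ι ι ℂ}
    (hx : star x ⬝ᵥ x = 1) (hr : r = -(polyEval A lam *ᵥ x)) :
    eta polyNormF TevenPoly lam x A = polyNormF (tevenMinPert m lam x r) ∧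
      ∀ B ∈ TevenPoly, (polyEval A lam + polyEval B lam) *ᵥ x = 0 →
        polyNormF B = polyNormF (tevenMinPert m lam x r) → B = tevenMinPert m lam x r :=
  eta_eq_polyNormF_of_sum_frobInner_eq _ (fun _ hB => sub_mem_TevenPoly hB tevenMinPert_mem)
    tevenMinPert_mem (add_polyEval_tevenMinPert_mulVec hx hr)
    fun _ hC => sum_frobInner_tevenMinPert hC

noncomputable def unstructuredMinPert (m : ℕ) (lam : ℂ) (x r : ι → ℂ) : Fin (m+1) → Matrix ι ι ℂ :=
  fun j => conj (lam ^ (j : ℕ)) • ((1 / lamNormSq m lam : ℂ) • vecMulVec r (star x))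

theorem polyEval_unstructuredMinPert_mulVec (hx : star x ⬝ᵥ x = 1) :
    polyEval (unstructuredMinPert m lam x r) lam *ᵥ x = r := by
  unfold unstructuredMinPert
  rw [polyEval_conj_smul_mulVec]
  simp only [smul_mulVec, vecMulVec_mulVec, hx, smul_smul, ← Finset.sum_smul]
  rw [sum_normSq_pow_mul, mul_one_div_cancel (Complex.ofReal_ne_zero.mpr (lamNormSq_pos m lam).ne')]
  simp

theorem sum_frobInner_unstructuredMinPert (C : Fin (m+1) → Matrix ι ι ℂ) :
    ∑ j, frobInner (unstructuredMinPert m lam x r j) (C j)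
      = ((1 / lamNormSq m lam : ℂ) • star r) ⬝ᵥ polyEval C lam *ᵥ x :=
  sum_frobInner_conj_smul fun j => by
    rw [frobInner_smul_left, frobInner_vecMulVec_left, star_star, smul_dotProduct, smul_eq_mul,
      map_div₀, map_one, Complex.conj_ofReal]

theorem eta_univ_eq {A : Fin (m+1) → Matrix ι ι ℂ} (hx : star x ⬝ᵥ x = 1)
    (hr : r = -(polyEval A lam *ᵥ x)) :
    eta polyNormF Set.univ lam x A = Real.sqrt (vecNormSq r / lamNormSq m lam) := by
  have hres : (polyEval A lam + polyEval (unstructuredMinPert m lam x r) lam) *ᵥ x = 0 := by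
    rw [add_mulVec, polyEval_unstructuredMinPert_mulVec hx, hr, add_neg_cancel]
  rw [(eta_eq_polyNormF_of_sum_frobInner_eq _ (fun _ _ => Set.mem_univ _) (Set.mem_univ _) hres
      fun C _ => sum_frobInner_unstructuredMinPert C).1, ← Real.sqrt_sq (polyNormF_nonneg _),
    polyNormF_sq, sum_frobInner_unstructuredMinPert, polyEval_unstructuredMinPert_mulVec hx,
    smul_dotProduct, star_dotProduct_self_eq_vecNormSq, smul_eq_mul, ← Complex.ofReal_one,
    ← Complex.ofReal_div, ← Complex.ofReal_mul, Complex.ofReal_re, one_div_mul_eq_div]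

end Minimizers

theorem Teven_backward_error_frobenius_general {n m : ℕ}
    (A : Fin (m+1) → Matrix (Fin n) (Fin n) ℂ)
    (lam : ℂ) (x : Fin n → ℂ) (hx : star x ⬝ᵥ x = 1)
    (r : Fin n → ℂ) (hr : r = -(polyEval A lam *ᵥ x))
    (Px : Matrix (Fin n) (Fin n) ℂ) (hPx : Px = 1 - vecMulVec x (star x))
    (E : Fin (m+1) → Matrix (Fin n) (Fin n) ℂ)
    (hE : ∀ j : Fin (m+1),
      E j = if Even (j : ℕ) then
          ((conj (lam ^ (j : ℕ)) * (x ⬝ᵥ r)) / (lamEvenNormSq m lam : ℂ)) •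
              vecMulVec (star x) (star x)
            + (conj (lam ^ (j : ℕ)) / (lamNormSq m lam : ℂ)) •
              (vecMulVec (star x) r * Px + Pxᵀ * vecMulVec r (star x))
        else
          (conj (lam ^ (j : ℕ)) / (lamNormSq m lam : ℂ)) •
            (Pxᵀ * vecMulVec r (star x) - vecMulVec (star x) r * Px)) :
    eta polyNormF TevenPoly lam x A
      = Real.sqrt (‖x ⬝ᵥ r‖ ^ 2 / lamEvenNormSq m lam
          + 2 * (vecNormSq r - ‖x ⬝ᵥ r‖ ^ 2) / lamNormSq m lam) ∧
    (Odd m → ‖lam‖ = 1 →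
      eta polyNormF TevenPoly lam x A = Real.sqrt 2 * eta polyNormF Set.univ lam x A) ∧
    E ∈ TevenPoly ∧
    (polyEval A lam + polyEval E lam) *ᵥ x = 0 ∧
    polyNormF E = eta polyNormF TevenPoly lam x A ∧
    (∀ ΔB ∈ TevenPoly, (polyEval A lam + polyEval ΔB lam) *ᵥ x = 0 →
      polyNormF ΔB = eta polyNormF TevenPoly lam x A → ΔB = E) := by
  obtain rfl : E = tevenMinPert m lam x r := funext fun j => by
    rw [hE j, hPx, vecMulVec_mul_one_sub_vecMulVec, one_sub_vecMulVec_transpose_mul,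
      dotProduct_comm r x]
    unfold tevenMinPert tevenBlock
    split_ifs <;> module
  obtain ⟨hη, huniq⟩ := eta_TevenPoly_eq hx hr
  refine ⟨hη.trans (polyNormF_tevenMinPert hx), fun hm hlam => ?_, tevenMinPert_mem,
    add_polyEval_tevenMinPert_mulVec hx hr, hη.symm,
    fun B hB hBres hBnorm => huniq B hB hBres (hBnorm.trans hη)⟩
  have hNe := lamEvenNormSq_pos m lam
  rw [hη, polyNormF_tevenMinPert hx, eta_univ_eq hx hr, ← Real.sqrt_mul zero_le_two,
    lamNormSq_eq_two_mul_lamEvenNormSq hm hlam]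
  congr 1
  field_simp
  ring

/-- Structured backward error of an approximate eigenpair of a T-even
matrix polynomial, Frobenius norm: explicit formula, the special case `m` odd and `|λ| = 1`,
and the unique minimal T-even perturbation. -/
theorem Teven_backward_error_frobenius {n m : ℕ}
    (A : Fin (m+1) → Matrix (Fin n) (Fin n) ℂ)
    (hA : A ∈ TevenPoly) (hreg : Regular A)
    (lam : ℂ) (x : Fin n → ℂ) (hx : star x ⬝ᵥ x = 1)
    (r : Fin n → ℂ) (hr : r = -(polyEval A lam *ᵥ x))
    (Px : Matrix (Fin n) (Fin n) ℂ) (hPx : Px = 1 - vecMulVec x (star x))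
    (E : Fin (m+1) → Matrix (Fin n) (Fin n) ℂ)
    (hE : ∀ j : Fin (m+1),
      E j = if Even (j : ℕ) then
          ((conj (lam ^ (j : ℕ)) * (x ⬝ᵥ r)) / (lamEvenNormSq m lam : ℂ)) •
              vecMulVec (star x) (star x)
            + (conj (lam ^ (j : ℕ)) / (lamNormSq m lam : ℂ)) •
              (vecMulVec (star x) r * Px + Pxᵀ * vecMulVec r (star x))
        else
          (conj (lam ^ (j : ℕ)) / (lamNormSq m lam : ℂ)) •
            (Pxᵀ * vecMulVec r (star x) - vecMulVec (star x) r * Px)) :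
    eta polyNormF TevenPoly lam x A
      = Real.sqrt (‖x ⬝ᵥ r‖ ^ 2 / lamEvenNormSq m lam
          + 2 * (vecNormSq r - ‖x ⬝ᵥ r‖ ^ 2) / lamNormSq m lam) ∧
    (Odd m → ‖lam‖ = 1 →
      eta polyNormF TevenPoly lam x A = Real.sqrt 2 * eta polyNormF Set.univ lam x A) ∧
    E ∈ TevenPoly ∧
    (polyEval A lam + polyEval E lam) *ᵥ x = 0 ∧
    polyNormF E = eta polyNormF TevenPoly lam x A ∧
    (∀ ΔB ∈ TevenPoly, (polyEval A lam + polyEval ΔB lam) *ᵥ x = 0 →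
      polyNormF ΔB = eta polyNormF TevenPoly lam x A → ΔB = E) :=
  Teven_backward_error_frobenius_general A lam x hx r hr Px hPx E hE
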